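/- Let (s = u₀, ..., u_j, v_{i+1}) be a simple path and (s = v₀, ..., v_l, s) a simple cycle with 0 ≤ i < l, and suppose u_h = v_m for some 0 < h ≤ j and i+1 < m ≤ l, where h is minimal among all such coincidences. Then the shortcut walk (s = u₀, u₁, ..., u_h = v_m, v_{m+1}, ..., v_l, s) is a simple cycle of length h + (l - m) + 1. -/

import Mathlib

/-! The shortcut follows `u` up to its first meeting point `u h = v m` with the tail
`v_{m+1}, …, v_l` of the cycle and then runs along that tail back to `s`. Its vertices are
distinct because both pieces are simple and, by the minimality of `h`, no vertex `u_a` with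
`a ≤ h` lies on the tail: `u_0 = v_0` and `u_h = v_m` are off the tail since the cycle is
simple. -/

namespace Splice

variable {α : Type*}

def splice (u v : ℕ → α) (h m : ℕ) : ℕ → α :=
  fun t => if t ≤ h then u t else v (m + (t - h))

variable {u v : ℕ → α} {h m l : ℕ}

lemma splice_of_le {t : ℕ} (ht : t ≤ h) : splice u v h m t = u t := if_pos ht

lemma splice_of_lt {t : ℕ} (ht : h < t) : splice u v h m t = v (m + (t - h)) :=
  if_neg (Nat.not_le.mpr ht)

lemma splice_zero : splice u v h m 0 = u 0 := splice_of_le (Nat.zero_le h)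

lemma splice_last (hml : m ≤ l) : splice u v h m (h + (l - m) + 1) = v (l + 1) := by
  rw [splice_of_lt (by omega)]
  congr 1
  omega

lemma splice_chain (E : α → α → Prop) (hml : m ≤ l) (hu : ∀ g < h, E (u g) (u (g + 1))) (huv : u h = v m)
    (hv : ∀ g, m ≤ g → g ≤ l → E (v g) (v (g + 1))) :
    ∀ t < h + (l - m) + 1, E (splice u v h m t) (splice u v h m (t + 1)) := by
  intro t ht
  rcases Nat.lt_trichotomy t h with hlt | rfl | hgt
  · rw [splice_of_le hlt.le, splice_of_le hlt]
    exact hu t hlt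
  · rw [splice_of_le le_rfl, splice_of_lt (Nat.lt_add_one t), huv, Nat.add_sub_cancel_left]
    exact hv m le_rfl hml
  · rw [splice_of_lt hgt, splice_of_lt (by omega),
      show m + (t + 1 - h) = m + (t - h) + 1 by omega]
    exact hv _ (by omega) (by omega)

lemma splice_injOn (hu : ∀ a b, a ≤ h → b ≤ h → u a = u b → a = b)
    (hv : ∀ a b, a ≤ l → b ≤ l → v a = v b → a = b)
    (hdisj : ∀ a b, a ≤ h → m < b → b ≤ l → u a ≠ v b) :
    ∀ a b, a < h + (l - m) + 1 → b < h + (l - m) + 1 →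
      splice u v h m a = splice u v h m b → a = b := by
  intro a b ha hb hab
  rcases le_or_gt a h with ha' | ha' <;> rcases le_or_gt b h with hb' | hb' <;>
    simp only [splice_of_le, splice_of_lt, *] at hab
  · exact hu a b ha' hb' hab
  · exact absurd hab (hdisj a _ ha' (by omega) (by omega))
  · exact absurd hab.symm (hdisj b _ hb' (by omega) (by omega))
  · have := hv _ _ (by omega) (by omega) hab
    omega

end Splice

lemma disjoint_tail_of_first_meet {α : Type*} {u v : ℕ → α} {h m l : ℕ}
    (h0 : u 0 = v 0) (huv : u h = v m) (hv : ∀ a b, a ≤ l → b ≤ l → v a = v b → a = b)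
    (hmin : ∀ a b, 0 < a → a < h → m < b → b ≤ l → u a ≠ v b) :
    ∀ a b, a ≤ h → m < b → b ≤ l → u a ≠ v b := by
  intro a b ha hmb hbl hab
  rcases Nat.eq_zero_or_pos a with rfl | ha0
  · have := hv 0 b (Nat.zero_le l) hbl (h0 ▸ hab)
    omega
  rcases ha.lt_or_eq with hah | rfl
  · exact hmin a b ha0 hah hmb hbl hab
  · have := hv m b (by omega) hbl (huv ▸ hab)
    omega

open Splice in
theorem stmt7_general {α : Type*} (E : α → α → Prop) (s : α) (u v : ℕ → α)
    (j l i h m : ℕ)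
    (hus : u 0 = s) (hvs : v 0 = s) (hclose : v (l + 1) = s)
    (hpathE : ∀ g < j, E (u g) (u (g + 1)))
    (hpathD : ∀ a b, a ≤ j → b ≤ j → u a = u b → a = b)
    (hcycE : ∀ g ≤ l, E (v g) (v (g + 1)))
    (hcycD : ∀ a b, a ≤ l → b ≤ l → v a = v b → a = b)
    (hhj : h ≤ j) (him : i + 1 < m) (hml : m ≤ l)
    (huv : u h = v m)
    (hmin : ∀ h' m', 0 < h' → h' < h → i + 1 < m' → m' ≤ l → u h' ≠ v m') :
    let w : ℕ → α := fun t => if t ≤ h then u t else v (m + (t - h))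
    w 0 = s ∧ w (h + (l - m) + 1) = s ∧
      (∀ t < h + (l - m) + 1, E (w t) (w (t + 1))) ∧
      (∀ a b, a < h + (l - m) + 1 → b < h + (l - m) + 1 → w a = w b → a = b) := by
  have hdisj : ∀ a b, a ≤ h → m < b → b ≤ l → u a ≠ v b :=
    disjoint_tail_of_first_meet (hus.trans hvs.symm) huv hcycD
      fun a b ha hah hmb hbl => hmin a b ha hah (by omega) hbl
  refine ⟨splice_zero.trans hus, (splice_last hml).trans hclose, ?_, ?_⟩
  · exact splice_chain E hml (fun g hg => hpathE g (by omega)) huv (fun g _ hg => hcycE g hg)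
  · exact splice_injOn (fun a b ha hb => hpathD a b (by omega) (by omega)) hcycD hdisj

/-- With a simple path `(s = u₀, …, u_j, v_{i+1})`, a simple cycle
`(s = v₀, …, v_l, s)` with `0 ≤ i < l`, and a coincidence `u_h = v_m`
(`0 < h ≤ j`, `i + 1 < m ≤ l`) with `h` minimal, the shortcut walk
`(s = u₀, …, u_h = v_m, v_{m+1}, …, v_l, s)` is a simple cycle of length
`h + (l - m) + 1`. -/
theorem stmt7 {α : Type*} (E : α → α → Prop) (s : α) (u v : ℕ → α)
    (j l i h m : ℕ)
    (hus : u 0 = s) (hvs : v 0 = s) (hclose : v (l + 1) = s)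
    (hpathE : ∀ g < j, E (u g) (u (g + 1)))
    (hpathD : ∀ a b, a ≤ j → b ≤ j → u a = u b → a = b)
    (hnew : ∀ a ≤ j, u a ≠ v (i + 1))
    (hconn : E (u j) (v (i + 1)))
    (hcycE : ∀ g ≤ l, E (v g) (v (g + 1)))
    (hcycD : ∀ a b, a ≤ l → b ≤ l → v a = v b → a = b)
    (hil : i < l)
    (hh : 0 < h) (hhj : h ≤ j) (him : i + 1 < m) (hml : m ≤ l)
    (huv : u h = v m)
    (hmin : ∀ h' m', 0 < h' → h' < h → i + 1 < m' → m' ≤ l → u h' ≠ v m') :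
    let w : ℕ → α := fun t => if t ≤ h then u t else v (m + (t - h))
    w 0 = s ∧ w (h + (l - m) + 1) = s ∧
      (∀ t < h + (l - m) + 1, E (w t) (w (t + 1))) ∧
      (∀ a b, a < h + (l - m) + 1 → b < h + (l - m) + 1 → w a = w b → a = b) :=
  stmt7_general E s u v j l i h m hus hvs hclose hpathE hpathD hcycE hcycD hhj him hml huv hmin
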